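/- If f:S¹→ℂ is continuous and e^f belongs to Ḣ^{1/2}(S¹), then f belongs to Ḣ^{1/2}(S¹). -/

import Mathlib

open MeasureTheory Real

/-- Finiteness of the homogeneous `H^{1/2}(S¹)` seminorm, via the double-integral formula. -/
def memHhalf (g : ℝ → ℂ) : Prop :=
  (∫⁻ α in Set.Ioc (0:ℝ) (2 * Real.pi), ∫⁻ β in Set.Ioc (0:ℝ) (2 * Real.pi),
      ENNReal.ofReal (‖g α - g β‖^2 / (Real.sin ((α - β) / 2))^2)) < ⊤

/-! On the bounded range of `f` the exponential is locally bi-Lipschitz: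
once `‖f x - f y‖ ≤ 1/2` (uniform continuity), `‖f x - f y‖ ≤ 2 e^M ‖e^{f x} - e^{f y}‖`. Away from
the diagonal `sin ((x - y)/2)` is bounded below, so there the integrand for `f` is bounded. Hence
`‖f x - f y‖² ≤ C₁ ‖e^{f x} - e^{f y}‖² + C₂ sin² ((x - y)/2)`, and the seminorm of `f` is at most
`C₁` times that of `e^f` plus `C₂ (2π)²`. -/

theorem Function.Periodic.exists_pos_dist_lt_of_norm_coe_sub_lt {α : Type*} [PseudoMetricSpace α]
    {f : ℝ → α} {c : ℝ} (hp : Function.Periodic f c) (hc : 0 < c) (hf : Continuous f)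
    {ε : ℝ} (hε : 0 < ε) :
    ∃ δ > 0, ∀ x y, ‖((x - y : ℝ) : AddCircle c)‖ < δ → dist (f x) (f y) < ε := by
  have := Fact.mk hc
  have hlift : Continuous hp.lift := continuous_coinduced_dom.2 hf
  obtain ⟨δ, hδ, hF⟩ := Metric.uniformContinuous_iff.mp
    (CompactSpace.uniformContinuous_of_continuous hlift) ε hε
  refine ⟨δ, hδ, fun x y hxy => ?_⟩
  simpa [dist_eq_norm] using
    hF (a := (x : AddCircle c)) (b := y) (by simpa [dist_eq_norm] using hxy)

theorem norm_coe_div_pi_le_abs_sin_half (t : ℝ) :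
    ‖(t : AddCircle (2 * π))‖ / π ≤ |sin (t / 2)| := by
  set s := t - round ((2 * π)⁻¹ * t) * (2 * π)
  have hnorm : ‖(t : AddCircle (2 * π))‖ = |s| := AddCircle.norm_eq (2 * π)
  have hle : |s| ≤ π := by
    have := AddCircle.norm_le_half_period (2 * π) (x := (t : AddCircle (2 * π))) two_pi_pos.ne'
    rwa [hnorm, abs_of_pos two_pi_pos, mul_div_cancel_left₀ _ two_ne_zero] at this
  have hsin : |sin (t / 2)| = |sin (|s| / 2)| := by
    rw [show t / 2 = s / 2 + round ((2 * π)⁻¹ * t) * π by ring, sin_add_int_mul_pi, abs_mul,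
      abs_zpow, abs_neg, abs_one, one_zpow, one_mul]
    rcases abs_cases s with ⟨h, _⟩ | ⟨h, _⟩ <;> rw [h]
    rw [neg_div, sin_neg, abs_neg]
  have hsin_nonneg : 0 ≤ sin (|s| / 2) :=
    sin_nonneg_of_nonneg_of_le_pi (by positivity) (by linarith [pi_pos])
  rw [hnorm, hsin, abs_of_nonneg hsin_nonneg]
  calc |s| / π = 2 / π * (|s| / 2) := by ring
    _ ≤ sin (|s| / 2) := mul_le_sin (by positivity) (by linarith)

theorem Complex.norm_le_two_mul_norm_exp_sub_one {z : ℂ} (hz : ‖z‖ ≤ 1 / 2) :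
    ‖z‖ ≤ 2 * ‖Complex.exp z - 1‖ := by
  have hquad := Complex.norm_exp_sub_one_sub_id_le (hz.trans (by norm_num))
  have htri : ‖z‖ ≤ ‖Complex.exp z - 1‖ + ‖Complex.exp z - 1 - z‖ := by
    simpa using norm_sub_le (Complex.exp z - 1) (Complex.exp z - 1 - z)
  nlinarith [norm_nonneg z]

theorem Complex.norm_sub_le_mul_norm_exp_sub {z w : ℂ} {M : ℝ} (hw : -M ≤ w.re)
    (hzw : ‖z - w‖ ≤ 1 / 2) :
    ‖z - w‖ ≤ 2 * Real.exp M * ‖Complex.exp z - Complex.exp w‖ := by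
  have hfactor : Complex.exp z - Complex.exp w = Complex.exp w * (Complex.exp (z - w) - 1) := by
    rw [mul_sub, mul_one, ← Complex.exp_add, add_sub_cancel]
  have hexp : 1 ≤ Real.exp M * ‖Complex.exp w‖ := by
    rw [Complex.norm_exp, ← Real.exp_add]
    exact Real.one_le_exp (by linarith)
  calc ‖z - w‖ ≤ 2 * ‖Complex.exp (z - w) - 1‖ :=
        Complex.norm_le_two_mul_norm_exp_sub_one hzw
    _ ≤ 2 * (Real.exp M * ‖Complex.exp w‖) * ‖Complex.exp (z - w) - 1‖ := by
      nlinarith [norm_nonneg (Complex.exp (z - w) - 1)]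
    _ = 2 * Real.exp M * ‖Complex.exp z - Complex.exp w‖ := by
      rw [hfactor, norm_mul]; ring

theorem memHhalf_of_sq_norm_sub_le {f g : ℝ → ℂ} {C₁ C₂ : ℝ} (hg : memHhalf g)
    (hC₂ : 0 ≤ C₂)
    (hfg : ∀ x y, ‖f x - f y‖ ^ 2 ≤ C₁ * ‖g x - g y‖ ^ 2 + C₂ * sin ((x - y) / 2) ^ 2) :
    memHhalf f := by
  set S := Set.Ioc (0 : ℝ) (2 * π)
  set G := fun x y => ENNReal.ofReal (‖g x - g y‖ ^ 2 / sin ((x - y) / 2) ^ 2)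
  have hpt : ∀ x y, ENNReal.ofReal (‖f x - f y‖ ^ 2 / sin ((x - y) / 2) ^ 2)
      ≤ ENNReal.ofReal C₁ * G x y + ENNReal.ofReal C₂ := by
    intro x y
    have hdiv : ‖f x - f y‖ ^ 2 / sin ((x - y) / 2) ^ 2
        ≤ C₁ * (‖g x - g y‖ ^ 2 / sin ((x - y) / 2) ^ 2) + C₂ := by
      rcases eq_or_ne (sin ((x - y) / 2)) 0 with h | h
      · simp [h, hC₂]
      · rw [div_le_iff₀ (by positivity)]
        calc _ ≤ _ := hfg x y
          _ = _ := by field_simp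
    calc _ ≤ ENNReal.ofReal (C₁ * (‖g x - g y‖ ^ 2 / sin ((x - y) / 2) ^ 2) + C₂) :=
          ENNReal.ofReal_le_ofReal hdiv
      _ ≤ _ := ENNReal.ofReal_add_le.trans_eq (by rw [ENNReal.ofReal_mul' (by positivity)])
  have hS : volume S ≠ ⊤ := by simp only [S, Real.volume_Ioc]; finiteness
  unfold memHhalf
  calc _ ≤ ∫⁻ x in S, ∫⁻ y in S, (ENNReal.ofReal C₁ * G x y + ENNReal.ofReal C₂) :=
        lintegral_mono fun x => lintegral_mono fun y => hpt x y
    _ = ENNReal.ofReal C₁ * (∫⁻ x in S, ∫⁻ y in S, G x y)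
          + ENNReal.ofReal C₂ * volume S * volume S := by
        simp only [lintegral_add_right _ measurable_const, lintegral_const, mul_assoc,
          lintegral_const_mul' _ _ ENNReal.ofReal_ne_top, Measure.restrict_apply_univ]
    _ < ⊤ := by
        have hG : ∫⁻ x in S, ∫⁻ y in S, G x y ≠ ⊤ := hg.ne
        finiteness

theorem exists_sq_norm_sub_le_sq_norm_exp_sub {f : ℝ → ℂ} (hf : Continuous f)
    (hp : Function.Periodic f (2 * π)) :
    ∃ C₁ C₂ : ℝ, 0 ≤ C₂ ∧ ∀ x y, ‖f x - f y‖ ^ 2 ≤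
      C₁ * ‖Complex.exp (f x) - Complex.exp (f y)‖ ^ 2 + C₂ * sin ((x - y) / 2) ^ 2 := by
  obtain ⟨M, hM⟩ := (hp.isBounded_of_continuous two_pi_pos.ne' hf).exists_norm_le
  obtain ⟨δ, hδ, hnear⟩ := hp.exists_pos_dist_lt_of_norm_coe_sub_lt two_pi_pos hf one_half_pos
  refine ⟨(2 * Real.exp M) ^ 2, (2 * M * π / δ) ^ 2, sq_nonneg _, fun x y => ?_⟩
  have hx := hM (f x) ⟨x, rfl⟩
  have hy := hM (f y) ⟨y, rfl⟩
  have hM₀ : 0 ≤ M := (norm_nonneg _).trans hx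
  by_cases hxy : ‖((x - y : ℝ) : AddCircle (2 * π))‖ < δ
  · have hre : -M ≤ (f y).re := by
      linarith [neg_abs_le (f y).re, Complex.abs_re_le_norm (f y)]
    have hlog := Complex.norm_sub_le_mul_norm_exp_sub hre
      (by simpa [dist_eq_norm] using (hnear x y hxy).le)
    have hsq := pow_le_pow_left₀ (norm_nonneg _) hlog 2
    rw [mul_pow] at hsq
    exact le_add_of_le_of_nonneg hsq (by positivity)
  · have hsin : δ / π ≤ |sin ((x - y) / 2)| :=
      (div_le_div_of_nonneg_right (not_lt.mp hxy) pi_pos.le).trans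
        (norm_coe_div_pi_le_abs_sin_half _)
    have hfar : ‖f x - f y‖ ≤ 2 * M * π / δ * |sin ((x - y) / 2)| :=
      calc ‖f x - f y‖ ≤ 2 * M := (norm_sub_le _ _).trans (by linarith)
        _ = 2 * M * π / δ * (δ / π) := by field_simp
        _ ≤ _ := by gcongr
    have hsq := pow_le_pow_left₀ (norm_nonneg _) hfar 2
    rw [mul_pow, sq_abs] at hsq
    exact le_add_of_nonneg_of_le (by positivity) hsq

theorem log_of_hhalf (f : ℝ → ℂ) (hf : Continuous f)
    (hper : Function.Periodic f (2 * Real.pi))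
    (hexp : memHhalf (fun x => Complex.exp (f x))) :
    memHhalf f := by
  obtain ⟨C₁, C₂, hC₂, hbound⟩ := exists_sq_norm_sub_le_sq_norm_exp_sub hf hper
  exact memHhalf_of_sq_norm_sub_le hexp hC₂ hbound
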